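/- Let T: ℂ_d[z] → ℂ_d[z] be a linear operator defined by T(p) = Σ_{j=0}^{d} a_j p^{(j)} with complex constants a_j, a₀ = 1. For the extension T̄(z^k w^l) := T(z^k)w^l, if T̄((z+w)^d) is a stable polynomial in (z,w), then T preserves stability: whenever p ∈ ℂ_d[z] is stable (nonvanishing on the open upper half-plane), T(p) is stable or identically zero. -/

import Mathlib

open Polynomial

/-- The differential operator `T p = Σ_{j=0}^d a_j p^{(j)}` on `ℂ_d[z]`. -/
noncomputable def TdiffC (d : ℕ) (a : ℕ → ℂ) (p : Polynomial ℂ) : Polynomial ℂ :=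
  ∑ j ∈ Finset.range (d + 1), a j • (Polynomial.derivative^[j] p)

/-- The coefficientwise extension `T̄` to `ℂ[z][w]` (outer variable `w`,
coefficients polynomials in `z`): `T̄(zᵏ wˡ) = T(zᵏ) wˡ`. -/
noncomputable def TbarC (d : ℕ) (a : ℕ → ℂ) (q : Polynomial (Polynomial ℂ)) :
    Polynomial (Polynomial ℂ) :=
  q.sum fun l c => Polynomial.C (TdiffC d a c) * Polynomial.X ^ l

/-!
`F := T(zᵈ)` is monic of degree `d` because `a₀ = 1`, and `T` commutes with translations, so the
symbol `T̄((z + w)ᵈ)` is `F(z + w)`; taking `z = w` shows that `F` is stable, i.e. its roots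
`α₁, …, α_d` lie in the closed lower half-plane. Comparing coefficients, `d! · (T p)(z)` is the
value at `z` of the iterated polar derivative of `p` with poles `z - α₁, …, z - α_d`, all in the
open upper half-plane. By Laguerre's theorem a polar derivative `n p + (ζ - X) p'` of a stable `p`
of degree `≤ n` with pole `Im ζ > 0` is again stable, so this value does not vanish.
-/

open scoped Nat
open Finset.HasAntidiagonal

theorem Complex.normSq_multiset_sum_le (s : Multiset ℂ) :
    Complex.normSq s.sum ≤ Multiset.card s * (s.map Complex.normSq).sum := by
  set E := s.toEnumFinset
  rw [← s.map_toEnumFinset_fst, Multiset.card_map, Multiset.map_map, Finset.card_val]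
  calc Complex.normSq (∑ x ∈ E, x.1) = ‖∑ x ∈ E, x.1‖ ^ 2 := (Complex.sq_norm _).symm
    _ ≤ (∑ x ∈ E, ‖x.1‖) ^ 2 := by gcongr; exact norm_sum_le _ _
    _ ≤ E.card * ∑ x ∈ E, ‖x.1‖ ^ 2 := sq_sum_le_card_mul_sum_sq
    _ = E.card * ∑ x ∈ E, Complex.normSq x.1 := by simp only [Complex.sq_norm]

theorem Complex.mul_normSq_sum_add_im_sum_le {s : Multiset ℂ} {m : ℕ}
    (hs : Multiset.card s ≤ m) {c : ℝ} (hc : 0 ≤ c) :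
    c * Complex.normSq s.sum + m * s.sum.im
      ≤ m * (s.map fun v => c * Complex.normSq v + v.im).sum := by
  have him : s.sum.im = (s.map Complex.im).sum := map_multiset_sum Complex.imAddGroupHom s
  have hnormSq : 0 ≤ (s.map Complex.normSq).sum :=
    Multiset.sum_nonneg fun _ hx => by
      obtain ⟨v, -, rfl⟩ := Multiset.mem_map.mp hx
      exact Complex.normSq_nonneg v
  have hcard : (Multiset.card s : ℝ) ≤ m := by exact_mod_cast hs
  rw [Multiset.sum_map_add, Multiset.sum_map_mul_left, him, mul_add, add_le_add_iff_right]
  calc c * Complex.normSq s.sum ≤ c * (Multiset.card s * (s.map Complex.normSq).sum) := by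
        gcongr; exact Complex.normSq_multiset_sum_le s
    _ ≤ m * (c * (s.map Complex.normSq).sum) := by
        nlinarith [mul_le_mul_of_nonneg_right hcard hnormSq]

namespace Polynomial

variable {R : Type*} [CommRing R]

theorem natDegree_multiset_prod_X_sub_C_le (s : Multiset R) :
    (s.map (X - C ·)).prod.natDegree ≤ Multiset.card s := by
  refine (natDegree_multiset_prod_le _).trans ?_
  calc _ ≤ (s.map fun _ => 1).sum := by
        rw [Multiset.map_map]
        exact Multiset.sum_map_le_sum_map _ _ fun a _ => natDegree_X_sub_C_le a
    _ = Multiset.card s := by simp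

theorem derivative_taylor (r : R) (p : R[X]) :
    derivative (taylor r p) = taylor r (derivative p) := by
  simp [taylor_apply, derivative_comp]

noncomputable def polarDeriv (n : ℕ) (ζ : R) (p : R[X]) : R[X] :=
  C (n : R) * p + (C ζ - X) * derivative p

noncomputable def iteratedPolarDeriv : List R → R[X] → R[X]
  | [], p => p
  | ζ :: l, p => iteratedPolarDeriv l (polarDeriv (l.length + 1) ζ p)

theorem natDegree_polarDeriv_le {n : ℕ} {p : R[X]} (hp : p.natDegree ≤ n + 1) (ζ : R) :
    (polarDeriv (n + 1) ζ p).natDegree ≤ n := by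
  rw [natDegree_le_iff_coeff_eq_zero]
  intro N hN
  obtain ⟨k, rfl⟩ := Nat.exists_eq_add_of_lt hN
  have hk : p.coeff (n + k + 1 + 1) = 0 := coeff_eq_zero_of_natDegree_lt (by omega)
  simp only [polarDeriv, coeff_add, coeff_C_mul, sub_mul, coeff_sub, coeff_X_mul,
    coeff_derivative, hk]
  rcases k with _ | k
  · push_cast; ring
  · rw [coeff_eq_zero_of_natDegree_lt (by omega : p.natDegree < n + (k + 1) + 1)]; ring

theorem eval_iterate_derivative_polarDeriv (n j : ℕ) (ζ : R) (p : R[X]) (z : R) :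
    (derivative^[j] (polarDeriv n ζ p)).eval z
      = (n - j) * (derivative^[j] p).eval z + (ζ - z) * (derivative^[j + 1] p).eval z := by
  have h : polarDeriv n ζ p = C (n : R) * p + C ζ * derivative p - derivative p * X := by
    rw [polarDeriv]; ring
  rw [h, iterate_map_sub, iterate_map_add, iterate_derivative_C_mul, iterate_derivative_C_mul,
    iterate_derivative_derivative_mul_X, ← Function.iterate_succ_apply]
  simp only [eval_sub, eval_add, eval_mul, eval_C, eval_X, eval_natCast, nsmul_eq_mul,
    Nat.succ_eq_add_one]
  ring

theorem eval_iteratedPolarDeriv (z : R) : ∀ (l : List R) (p : R[X]),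
    (iteratedPolarDeriv (l.map (z - ·)) p).eval z
      = ∑ jk ∈ antidiagonal l.length,
          (jk.2 ! : R) * ((l : Multiset R).map (X - C ·)).prod.coeff jk.2
            * (derivative^[jk.1] p).eval z
  | [], p => by simp [iteratedPolarDeriv]
  | α :: l, p => by
    rw [List.map_cons, iteratedPolarDeriv, List.length_map, eval_iteratedPolarDeriv z l,
      List.length_cons, ← Multiset.cons_coe, Multiset.map_cons, Multiset.prod_cons]
    set G := ((l : Multiset R).map (X - C ·)).prod
    set n := l.length
    have hG : G.natDegree ≤ n :=
      (natDegree_multiset_prod_X_sub_C_le (l : Multiset R)).trans_eq (Multiset.coe_card l)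
    have hXG : ∑ jk ∈ antidiagonal (n + 1),
        (jk.2 ! : R) * (X * G).coeff jk.2 * (derivative^[jk.1] p).eval z
        = ∑ jk ∈ antidiagonal n,
            ((jk.2 + 1)! : R) * G.coeff jk.2 * (derivative^[jk.1] p).eval z := by
      rw [Finset.Nat.sum_antidiagonal_succ']
      simp only [coeff_X_mul_zero, coeff_X_mul, mul_zero, zero_mul, zero_add]
    have hG' : ∑ jk ∈ antidiagonal (n + 1),
        (jk.2 ! : R) * G.coeff jk.2 * (derivative^[jk.1] p).eval z
        = ∑ jk ∈ antidiagonal n,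
            (jk.2 ! : R) * G.coeff jk.2 * (derivative^[jk.1 + 1] p).eval z := by
      rw [Finset.Nat.sum_antidiagonal_succ,
        coeff_eq_zero_of_natDegree_lt (by omega : G.natDegree < n + 1)]
      simp only [mul_zero, zero_mul, zero_add]
    have hαG : ∑ jk ∈ antidiagonal (n + 1),
        (jk.2 ! : R) * (α * G.coeff jk.2) * (derivative^[jk.1] p).eval z
        = α * ∑ jk ∈ antidiagonal (n + 1),
          (jk.2 ! : R) * G.coeff jk.2 * (derivative^[jk.1] p).eval z := by
      rw [Finset.mul_sum]
      exact Finset.sum_congr rfl fun _ _ => by ring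
    simp only [sub_mul, coeff_sub, coeff_C_mul, mul_sub, Finset.sum_sub_distrib, hXG, hαG, hG',
      Finset.mul_sum]
    rw [← Finset.sum_sub_distrib]
    refine Finset.sum_congr rfl fun jk hjk => ?_
    have hn : ((n + 1 : ℕ) : R) - jk.1 = jk.2 + 1 := by
      rw [← mem_antidiagonal.mp hjk]; push_cast; ring
    rw [eval_iterate_derivative_polarDeriv, hn, Nat.factorial_succ]
    push_cast
    ring

def IsStable (p : ℂ[X]) : Prop :=
  ∀ z : ℂ, 0 < z.im → p.eval z ≠ 0

theorem IsStable.im_nonpos_of_mem_roots {p : ℂ[X]} (hp : p.IsStable) {r : ℂ}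
    (hr : r ∈ p.roots) : r.im ≤ 0 :=
  not_lt.mp fun h => hp r h (isRoot_of_mem_roots hr)

/-- Laguerre's theorem. If `m p(w) + (ζ - w) p'(w) = 0`, the logarithmic derivative gives
`∑ (w - r)⁻¹ = m (w - ζ)⁻¹` over the roots `r` of `p`. The convex function
`φ v = Im w · |v|² + Im v` is `Im u · |(w - u)⁻¹|²` at `v = (w - u)⁻¹`: it is `≤ 0` at each
`(w - r)⁻¹` and `> 0` at `(w - ζ)⁻¹`, contradicting Jensen's inequality. -/
theorem IsStable.polarDeriv {p : ℂ[X]} (hp : p.IsStable) {m : ℕ} (hm : m ≠ 0)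
    (hdeg : p.natDegree ≤ m) {ζ : ℂ} (hζ : 0 < ζ.im) : (polarDeriv m ζ p).IsStable := by
  intro w hw h
  simp only [Polynomial.polarDeriv, eval_add, eval_mul, eval_C, eval_sub, eval_X] at h
  have hpw : p.eval w ≠ 0 := hp w hw
  have hwζ : w - ζ ≠ 0 := by
    intro h'
    rw [← neg_sub, h', neg_zero, zero_mul, add_zero] at h
    exact mul_ne_zero (Nat.cast_ne_zero.mpr hm) hpw h
  set s := p.roots.map fun r => (w - r)⁻¹
  have hsum : s.sum = m * (w - ζ)⁻¹ := by
    have hlog := (IsAlgClosed.splits p).eval_derivative_div_eval_of_ne_zero hpw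
    simp only [one_div] at hlog
    rw [← hlog, div_eq_iff hpw]
    field_simp
    linear_combination -h
  have hφ_inv : ∀ u : ℂ, w.im * Complex.normSq (w - u)⁻¹ + ((w - u)⁻¹).im
      = u.im * Complex.normSq (w - u)⁻¹ := fun u => by
    rw [Complex.inv_im, Complex.normSq_inv, Complex.sub_im]
    ring
  have hφ : ∀ v ∈ s, w.im * Complex.normSq v + v.im ≤ 0 := by
    simp only [s, Multiset.mem_map]
    rintro _ ⟨r, hr, rfl⟩
    rw [hφ_inv]
    exact mul_nonpos_of_nonpos_of_nonneg (hp.im_nonpos_of_mem_roots hr) (Complex.normSq_nonneg _)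
  have hφζ : 0 < w.im * Complex.normSq (w - ζ)⁻¹ + ((w - ζ)⁻¹).im := by
    rw [hφ_inv]
    exact mul_pos hζ (Complex.normSq_pos.mpr (inv_ne_zero hwζ))
  have hcard : Multiset.card s ≤ m := by simpa [s] using (card_roots' p).trans hdeg
  have : (m : ℝ) ^ 2 * (w.im * Complex.normSq (w - ζ)⁻¹ + ((w - ζ)⁻¹).im) ≤ 0 :=
    calc (m : ℝ) ^ 2 * (w.im * Complex.normSq (w - ζ)⁻¹ + ((w - ζ)⁻¹).im)
        = w.im * Complex.normSq s.sum + m * s.sum.im := by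
          rw [hsum, Complex.normSq_mul, Complex.normSq_natCast, Complex.mul_im]
          simp only [Complex.natCast_re, Complex.natCast_im]
          ring
      _ ≤ m * (s.map fun v => w.im * Complex.normSq v + v.im).sum :=
          Complex.mul_normSq_sum_add_im_sum_le hcard hw.le
      _ ≤ 0 := mul_nonpos_of_nonneg_of_nonpos m.cast_nonneg
          ((Multiset.sum_map_le_sum_map _ _ hφ).trans_eq (by simp))
  have hm0 : (0 : ℝ) < m := Nat.cast_pos.mpr (Nat.pos_of_ne_zero hm)
  exact this.not_gt (mul_pos (pow_pos hm0 2) hφζ)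

theorem IsStable.iteratedPolarDeriv : ∀ {l : List ℂ} {p : ℂ[X]}, p.IsStable →
    p.natDegree ≤ l.length → (∀ ζ ∈ l, 0 < ζ.im) → (Polynomial.iteratedPolarDeriv l p).IsStable
  | [], _, hp, _, _ => hp
  | ζ :: l, _, hp, hdeg, hl =>
    (hp.polarDeriv l.length.succ_ne_zero hdeg (hl ζ List.mem_cons_self)).iteratedPolarDeriv
      (natDegree_polarDeriv_le hdeg ζ) fun ζ' h => hl ζ' (List.mem_cons_of_mem _ h)

end Polynomial

section DiffOperator

variable (d : ℕ) (a : ℕ → ℂ)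

theorem TdiffC_zero : TdiffC d a 0 = 0 := by
  simp [TdiffC]

theorem TdiffC_add (p q : ℂ[X]) : TdiffC d a (p + q) = TdiffC d a p + TdiffC d a q := by
  simp only [TdiffC, iterate_map_add, smul_add, Finset.sum_add_distrib]

theorem TdiffC_smul (c : ℂ) (p : ℂ[X]) : TdiffC d a (c • p) = c • TdiffC d a p := by
  simp only [TdiffC, iterate_derivative_smul, smul_comm (a _) c, Finset.smul_sum]

theorem natDegree_TdiffC_le (p : ℂ[X]) : (TdiffC d a p).natDegree ≤ p.natDegree :=
  natDegree_sum_le_of_forall_le _ _ fun j _ =>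
    (natDegree_smul_le _ _).trans ((natDegree_iterate_derivative p j).trans (Nat.sub_le _ _))

theorem TdiffC_taylor (r : ℂ) (p : ℂ[X]) :
    TdiffC d a (taylor r p) = taylor r (TdiffC d a p) := by
  simp only [TdiffC, map_sum, map_smul, Function.Commute.iterate_left (derivative_taylor r) _ _]

theorem eval_map_TbarC (q : ℂ[X][X]) (z w : ℂ) :
    ((TbarC d a q).map (evalRingHom z)).eval w = (TdiffC d a (q.eval (C w))).eval z := by
  induction q using Polynomial.induction_on' with
  | add p q hp hq =>
    rw [TbarC, sum_add_index _ _ _ (by simp [TdiffC_zero]) (by simp [TdiffC_add, add_mul]),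
      ← TbarC, ← TbarC, Polynomial.map_add, eval_add, hp, hq, eval_add, TdiffC_add, eval_add]
  | monomial n c =>
    rw [TbarC, sum_monomial_index _ _ (by simp [TdiffC_zero]), eval_monomial, ← C_pow, mul_comm c,
      ← smul_eq_C_mul (w ^ n), TdiffC_smul, Polynomial.map_mul, Polynomial.map_C,
      Polynomial.map_pow, Polynomial.map_X, eval_mul, eval_C, eval_pow, eval_X, coe_evalRingHom,
      eval_smul, smul_eq_mul, mul_comm]

theorem eval_map_TbarC_add_pow (z w : ℂ) :
    ((TbarC d a ((C X + X) ^ d)).map (evalRingHom z)).eval w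
      = (TdiffC d a (X ^ d)).eval (z + w) := by
  rw [eval_map_TbarC, eval_pow, eval_add, eval_C, eval_X, ← taylor_X_pow, TdiffC_taylor,
    taylor_eval]

variable {d a}

theorem factorial_mul_coeff_TdiffC_X_pow {j k : ℕ} (h : j + k = d) :
    (k ! : ℂ) * (TdiffC d a (X ^ d)).coeff k = d ! * a j := by
  have hj : j ∈ Finset.range (d + 1) := Finset.mem_range.mpr (by omega)
  rw [TdiffC, finsetSum_coeff, Finset.sum_eq_single_of_mem j hj fun i _ hi => ?_]
  · rw [coeff_smul, coeff_iterate_derivative, coeff_X_pow, if_pos (by omega), ← h,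
      add_comm k j, ← Nat.factorial_mul_descFactorial (Nat.le_add_right j k),
      Nat.add_sub_cancel_left]
    simp only [nsmul_eq_mul, mul_one, smul_eq_mul, Nat.cast_mul]
    ring
  · rw [coeff_smul, coeff_iterate_derivative, coeff_X_pow, if_neg (by omega), smul_zero, smul_zero]

theorem coeff_TdiffC_X_pow_self (ha0 : a 0 = 1) : (TdiffC d a (X ^ d)).coeff d = 1 := by
  have h := factorial_mul_coeff_TdiffC_X_pow (a := a) (zero_add d)
  rwa [ha0, mul_one, mul_eq_left₀ (Nat.cast_ne_zero.mpr d.factorial_ne_zero)] at h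

theorem natDegree_TdiffC_X_pow (ha0 : a 0 = 1) : (TdiffC d a (X ^ d)).natDegree = d :=
  natDegree_eq_of_le_of_coeff_ne_zero ((natDegree_TdiffC_le d a _).trans (natDegree_X_pow_le d))
    (by rw [coeff_TdiffC_X_pow_self ha0]; exact one_ne_zero)

theorem monic_TdiffC_X_pow (ha0 : a 0 = 1) : (TdiffC d a (X ^ d)).Monic := by
  rw [Monic, leadingCoeff, natDegree_TdiffC_X_pow ha0, coeff_TdiffC_X_pow_self ha0]

theorem factorial_mul_eval_TdiffC (p : ℂ[X]) (z : ℂ) :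
    (d ! : ℂ) * (TdiffC d a p).eval z = ∑ jk ∈ antidiagonal d,
      (jk.2 ! : ℂ) * (TdiffC d a (X ^ d)).coeff jk.2 * (derivative^[jk.1] p).eval z := by
  rw [Finset.sum_congr rfl fun jk hjk =>
    by rw [factorial_mul_coeff_TdiffC_X_pow (mem_antidiagonal.mp hjk)],
    Finset.Nat.sum_antidiagonal_eq_sum_range_succ
      (fun j _ => (d ! : ℂ) * a j * (derivative^[j] p).eval z),
    TdiffC, eval_finsetSum, Finset.mul_sum]
  simp only [eval_smul, smul_eq_mul, mul_assoc]

end DiffOperator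

theorem stmt_10 (d : ℕ) (a : ℕ → ℂ) (ha0 : a 0 = 1)
    -- the symbol `T̄((z+w)^d)` is stable in `(z, w)`:
    (hsymb : ∀ z w : ℂ, 0 < z.im → 0 < w.im →
      Polynomial.eval w
        ((TbarC d a ((Polynomial.C Polynomial.X + Polynomial.X) ^ d)).map
          (Polynomial.evalRingHom z)) ≠ 0) :
    -- then `T` preserves stability:
    ∀ p : Polynomial ℂ, p.natDegree ≤ d →
      (∀ z : ℂ, 0 < z.im → Polynomial.eval z p ≠ 0) →
      TdiffC d a p = 0 ∨ (∀ z : ℂ, 0 < z.im → Polynomial.eval z (TdiffC d a p) ≠ 0) := by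
  intro p hdeg hp
  refine Or.inr fun z hz h0 => ?_
  set F := TdiffC d a (X ^ d)
  have hF : F.IsStable := fun u hu => by
    have hu2 : 0 < (u / 2).im := by simpa using hu
    simpa [eval_map_TbarC_add_pow] using hsymb (u / 2) (u / 2) hu2 hu2
  have hlen : F.roots.toList.length = d := by
    rw [Multiset.length_toList, IsAlgClosed.card_roots_eq_natDegree, natDegree_TdiffC_X_pow ha0]
  have hpoles : ∀ ζ ∈ F.roots.toList.map (z - ·), 0 < ζ.im := by
    simp only [List.mem_map, Multiset.mem_toList]
    rintro _ ⟨α, hα, rfl⟩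
    simpa using add_pos_of_pos_of_nonneg hz (neg_nonneg.mpr (hF.im_nonpos_of_mem_roots hα))
  have h := IsStable.iteratedPolarDeriv hp (by rwa [List.length_map, hlen]) hpoles z hz
  rw [eval_iteratedPolarDeriv, Multiset.coe_toList,
    ← (IsAlgClosed.splits F).eq_prod_roots_of_monic (monic_TdiffC_X_pow ha0), hlen,
    ← factorial_mul_eval_TdiffC, h0, mul_zero] at h
  exact h rfl
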